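/- (Correctness of the compiler.) Let M be a PTIME TM with tape alphabet Γ and input alphabet Σ, together with an encoding as in the simulation setup. Then there exists a term T of ForNo such that for every input w ∈ Σ*: if M started from the configuration (ε, q₀, w) reaches a halting configuration c_HALT, then ⟨T, (∅[rgt → ⟨⟨w⟩⟩], 0)⟩ ⇓ τ for some state τ that cleanly simulates c_HALT (τ ≅ c_HALT). -/

import Mathlib

set_option linter.unusedVariables false

namespace ForNo

/-- Registers. -/
abbrev Reg := ℕ
/-- Stacks of natural numbers; the head is the top. -/
abbrev Stack := List ℕ
/-- Stores map registers to stacks. -/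
abbrev Store := Reg → Stack
/-- A state is a store together with an error counter. -/
abbrev FState := Store × ℕ

/-- The store mapping every register to the empty stack. -/
def emptyStore : Store := fun _ => []

/-- Store update. -/
def upd (φ : Store) (x : Reg) (s : Stack) : Store := fun y => if y = x then s else φ y

/-- Counter-guarded push operation. -/
def pushOp (n : ℕ) : Stack × ℕ → Stack × ℕ
  | (s, 0) => (n :: s, 0)
  | (s, c + 1) => if s.head? = some n then (s, c + 1) else (s, c)

/-- Counter-guarded pop operation. -/
def popOp (n : ℕ) : Stack × ℕ → Stack × ℕ
  | (s, c) =>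
      if s.head? = some n then
        match c with
        | 0 => (s.tail, 0)
        | c + 1 => (s, c + 1)
      else (s, c + 1)

mutual
  /-- Terms of the (raw) language. -/
  inductive Term : Type where
    | skip : Term
    | push : ℕ → Reg → Term
    | pop : ℕ → Reg → Term
    | seq : Term → Term → Term
    | ifeq : Reg → ℕ → Term → Term
    | normal : List Reg → Term → Term
    | fort : Reg → Bodies → Term
    | roft : Reg → Bodies → Term
  /-- Nonempty lists of iteration bodies. -/
  inductive Bodies : Type where
    | single : Term → Bodies
    | cons : Term → Bodies → Bodies
end

/-- `ps.get i` is `P_min(i,m)` where `ps = P₀ … P_m`. -/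
def Bodies.get : Bodies → ℕ → Term
  | .single t, _ => t
  | .cons t _, 0 => t
  | .cons _ ps, i + 1 => ps.get i

mutual
  /-- Big-step operational semantics `⟨T, ω⟩ ⇓ ω'`. -/
  inductive Eval : Term → FState → FState → Prop where
    | skip : ∀ ω, Eval .skip ω ω
    | seq : ∀ {t u : Term} {ω ω' ω'' : FState},
        Eval t ω ω' → Eval u ω' ω'' → Eval (.seq t u) ω ω''
    | push : ∀ (n : ℕ) (x : Reg) (φ : Store) (c : ℕ),
        Eval (.push n x) (φ, c) (upd φ x (pushOp n (φ x, c)).1, (pushOp n (φ x, c)).2)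
    | pop : ∀ (n : ℕ) (x : Reg) (φ : Store) (c : ℕ),
        Eval (.pop n x) (φ, c) (upd φ x (popOp n (φ x, c)).1, (popOp n (φ x, c)).2)
    | ifeq_true : ∀ {x n t} {φ : Store} {c : ℕ} {ω' : FState},
        (φ x).head? = some n → Eval t (φ, c) ω' → Eval (.ifeq x n t) (φ, c) ω'
    | ifeq_false : ∀ {x n t} (φ : Store) (c : ℕ),
        (φ x).head? ≠ some n → Eval (.ifeq x n t) (φ, c) (φ, c)
    | normal : ∀ {xs t ω ω'}, Eval t ω ω' → Eval (.normal xs t) ω ω'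
    | fort : ∀ {x ps ω ω'}, EvalList (ω.1 x) ps ω ω' → Eval (.fort x ps) ω ω'
    | roft : ∀ {x ps ω ω'}, EvalList (ω.1 x).reverse ps ω ω' → Eval (.roft x ps) ω ω'
  /-- Iteration judgment `⟦s, ps, ω⟧ ⇓ ω'`. -/
  inductive EvalList : Stack → Bodies → FState → FState → Prop where
    | nil : ∀ (ps : Bodies) (ω : FState), EvalList [] ps ω ω
    | cons : ∀ {i : ℕ} {t : Stack} {ps : Bodies} {ω ω'' ω' : FState},
        Eval (ps.get i) ω ω'' → EvalList t ps ω'' ω' → EvalList (i :: t) ps ω ω'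
end

mutual
  /-- The inversion map `−(·)` on terms. -/
  def Term.inv : Term → Term
    | .skip => .skip
    | .push n x => .pop n x
    | .pop n x => .push n x
    | .seq t u => .seq u.inv t.inv
    | .ifeq x n t => .ifeq x n t.inv
    | .normal xs t => .normal xs t.inv
    | .fort x ps => .roft x ps.inv
    | .roft x ps => .fort x ps.inv
  def Bodies.inv : Bodies → Bodies
    | .single t => .single t.inv
    | .cons t ps => .cons t.inv ps.inv
end

mutual
  /-- `t.Writes y` holds iff some `PUSH`/`POP` occurring in `t` writes register `y`. -/
  def Term.Writes : Term → Reg → Prop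
    | .skip, _ => False
    | .push _ x, y => x = y
    | .pop _ x, y => x = y
    | .seq t u, y => t.Writes y ∨ u.Writes y
    | .ifeq _ _ t, y => t.Writes y
    | .normal _ t, y => t.Writes y
    | .fort _ ps, y => ps.Writes y
    | .roft _ ps, y => ps.Writes y
  def Bodies.Writes : Bodies → Reg → Prop
    | .single t, y => t.Writes y
    | .cons t ps, y => t.Writes y ∨ ps.Writes y
end

mutual
  /-- `t.Leads y` holds iff `y` leads some `FOR`/`ROF` iteration occurring in `t`. -/
  def Term.Leads : Term → Reg → Prop
    | .skip, _ => False
    | .push _ _, _ => False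
    | .pop _ _, _ => False
    | .seq t u, y => t.Leads y ∨ u.Leads y
    | .ifeq _ _ t, y => t.Leads y
    | .normal _ t, y => t.Leads y
    | .fort x ps, y => x = y ∨ ps.Leads y
    | .roft x ps, y => x = y ∨ ps.Leads y
  def Bodies.Leads : Bodies → Reg → Prop
    | .single t, y => t.Leads y
    | .cons t ps, y => t.Leads y ∨ ps.Leads y
end

mutual
  /-- `t.Mentions y` holds iff register `y` occurs in `t`. -/
  def Term.Mentions : Term → Reg → Prop
    | .skip, _ => False
    | .push _ x, y => x = y
    | .pop _ x, y => x = y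
    | .seq t u, y => t.Mentions y ∨ u.Mentions y
    | .ifeq x _ t, y => x = y ∨ t.Mentions y
    | .normal xs t, y => y ∈ xs ∨ t.Mentions y
    | .fort x ps, y => x = y ∨ ps.Mentions y
    | .roft x ps, y => x = y ∨ ps.Mentions y
  def Bodies.Mentions : Bodies → Reg → Prop
    | .single t, y => t.Mentions y
    | .cons t ps, y => t.Mentions y ∨ ps.Mentions y
end

mutual
  /-- The finite set of registers occurring in a term. -/
  def Term.regs : Term → Finset Reg
    | .skip => ∅
    | .push _ x => {x}
    | .pop _ x => {x}
    | .seq t u => t.regs ∪ u.regs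
    | .ifeq x _ t => insert x t.regs
    | .normal xs t => xs.toFinset ∪ t.regs
    | .fort x ps => insert x ps.regs
    | .roft x ps => insert x ps.regs
  def Bodies.regs : Bodies → Finset Reg
    | .single t => t.regs
    | .cons t ps => t.regs ∪ ps.regs
end

mutual
  /-- Safe terms: generated by the grammar `S` (no `NORMAL`). -/
  def Term.Safe : Term → Prop
    | .skip => True
    | .push _ _ => True
    | .pop _ _ => True
    | .seq t u => t.Safe ∧ u.Safe
    | .ifeq _ _ t => t.Safe
    | .normal _ _ => False
    | .fort _ ps => ps.Safe
    | .roft _ ps => ps.Safe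
  def Bodies.Safe : Bodies → Prop
    | .single t => t.Safe
    | .cons t ps => t.Safe ∧ ps.Safe
end

/-- Raw terms: generated by the grammar `T` (iterations only inside `NORMAL` bodies,
which must be safe). -/
def Term.Raw : Term → Prop
  | .skip => True
  | .push _ _ => True
  | .pop _ _ => True
  | .seq t u => t.Raw ∧ u.Raw
  | .ifeq _ _ t => t.Raw
  | .normal _ t => t.Safe
  | .fort _ _ => False
  | .roft _ _ => False

mutual
  /-- The read-only constraints (i) and (ii) defining membership in ForNo. -/
  def Term.WF : Term → Prop
    | .skip => True
    | .push _ _ => True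
    | .pop _ _ => True
    | .seq t u => t.WF ∧ u.WF
    | .ifeq x _ t => t.WF ∧ ¬ t.Writes x
    | .normal xs t => t.WF ∧ (∀ x ∈ xs, ¬ t.Writes x) ∧ (∀ y, t.Leads y → y ∈ xs)
    | .fort x ps => ps.WF ∧ ¬ ps.Writes x
    | .roft x ps => ps.WF ∧ ¬ ps.Writes x
  def Bodies.WF : Bodies → Prop
    | .single t => t.WF
    | .cons t ps => t.WF ∧ ps.WF
end

/-- A raw term is in ForNo if it satisfies the read-only constraints. -/
def InForNo (t : Term) : Prop := t.Raw ∧ t.WF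

/-- `iterSeq t k` is the `k`-fold sequential composition `t;…;t` (`SKIP` for `k = 0`). -/
def iterSeq (t : Term) : ℕ → Term
  | 0 => .skip
  | 1 => t
  | n + 2 => .seq t (iterSeq t (n + 1))

/-- `mkBodiesAux g i k` is the list of bodies `g i, g (i+1), …, g (i+k)`. -/
def mkBodiesAux (g : ℕ → Term) : ℕ → ℕ → Bodies
  | i, 0 => .single (g i)
  | i, k + 1 => .cons (g i) (mkBodiesAux g (i + 1) k)

/-- `mkBodies g k` is the list of bodies `g 0, g 1, …, g k`. -/
def mkBodies (g : ℕ → Term) (k : ℕ) : Bodies := mkBodiesAux g 0 k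

/-- `COPY(x,y)` with bodies `PUSH[0] y, …, PUSH[k] y`. -/
def COPY (x y : Reg) (k : ℕ) : Term :=
  .normal [x] (.roft x (mkBodies (fun i => .push i y) k))

/-- `n` nested `FOR rgt` iterations around `PUSH[1] p`. -/
def powNest (rgt p : Reg) : ℕ → Term
  | 0 => .push 1 p
  | n + 1 => .fort rgt (.single (powNest rgt p n))

/-- The term `POW^n`. -/
def POW (rgt p : Reg) (n : ℕ) : Term := .normal [rgt] (powNest rgt p n)

/-- The term `REMOVE-BLANKS` for tape alphabet codes `{0,…,n−1}` and
input alphabet codes `{0,…,m−1}`. -/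
def REMOVEBLANKS (rgt g1 : Reg) (n m : ℕ) : Term :=
  .seq (.normal [rgt] (.roft rgt (mkBodies (fun i => .push i g1) (n - 1))))
       (.normal [g1]
         (.seq (.fort g1 (mkBodies (fun i => .pop i rgt) (n - 1)))
               (.roft g1 (mkBodies (fun i => if i < m then .push i rgt else .skip) m))))

mutual
  /-- Big-step semantics instrumented with the number of rule applications
  in the derivation. -/
  inductive EvalN : ℕ → Term → FState → FState → Prop where
    | skip : ∀ ω, EvalN 1 .skip ω ω
    | seq : ∀ {k l : ℕ} {t u : Term} {ω ω' ω'' : FState},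
        EvalN k t ω ω' → EvalN l u ω' ω'' → EvalN (k + l + 1) (.seq t u) ω ω''
    | push : ∀ (n : ℕ) (x : Reg) (φ : Store) (c : ℕ),
        EvalN 1 (.push n x) (φ, c) (upd φ x (pushOp n (φ x, c)).1, (pushOp n (φ x, c)).2)
    | pop : ∀ (n : ℕ) (x : Reg) (φ : Store) (c : ℕ),
        EvalN 1 (.pop n x) (φ, c) (upd φ x (popOp n (φ x, c)).1, (popOp n (φ x, c)).2)
    | ifeq_true : ∀ {k x n t} {φ : Store} {c : ℕ} {ω' : FState},
        (φ x).head? = some n → EvalN k t (φ, c) ω' → EvalN (k + 1) (.ifeq x n t) (φ, c) ω'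
    | ifeq_false : ∀ {x n t} (φ : Store) (c : ℕ),
        (φ x).head? ≠ some n → EvalN 1 (.ifeq x n t) (φ, c) (φ, c)
    | normal : ∀ {k xs t ω ω'}, EvalN k t ω ω' → EvalN (k + 1) (.normal xs t) ω ω'
    | fort : ∀ {k x ps ω ω'}, EvalListN k (ω.1 x) ps ω ω' → EvalN (k + 1) (.fort x ps) ω ω'
    | roft : ∀ {k x ps ω ω'}, EvalListN k (ω.1 x).reverse ps ω ω' → EvalN (k + 1) (.roft x ps) ω ω'
  inductive EvalListN : ℕ → Stack → Bodies → FState → FState → Prop where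
    | nil : ∀ (ps : Bodies) (ω : FState), EvalListN 1 [] ps ω ω
    | cons : ∀ {k l : ℕ} {i : ℕ} {t : Stack} {ps : Bodies} {ω ω'' ω' : FState},
        EvalN k (ps.get i) ω ω'' → EvalListN l t ps ω'' ω' →
        EvalListN (k + l + 1) (i :: t) ps ω ω'
end

/-! ### Turing machines -/

/-- Deterministic one-tape Turing machines with a semi-infinite tape, input/output
alphabet `S` embedded in the tape alphabet `Γ`, and direction `Bool`
(`false` = left, `true` = right). -/
structure TM (S : Type) where
  Q : Type
  finQ : Fintype Q
  q0 : Q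
  qhalt : Q
  Γ : Type
  finΓ : Fintype Γ
  decΓ : DecidableEq Γ
  blank : Γ
  embed : S → Γ
  embed_inj : Function.Injective embed
  blank_notin : ∀ a, embed a ≠ blank
  δ : Q → Γ → Q × Γ × Bool

namespace TM

variable {S : Type}

/-- Configurations `(u, q, v)`: left tape part (nearest cell first), current state,
right tape part starting with the scanned cell (no trailing blanks). -/
abbrev Config (M : TM S) : Type := List M.Γ × M.Q × List M.Γ

/-- Remove the trailing blanks of a list. -/
def trim (M : TM S) (l : List M.Γ) : List M.Γ :=
  letI := M.decΓ
  (l.reverse.dropWhile (fun a => decide (a = M.blank))).reverse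

/-- The single-step transition function. -/
def stepFn (M : TM S) (c : M.Config) : M.Config :=
  let u := c.1
  let q := c.2.1
  let v := c.2.2
  let a := v.headD M.blank
  let r := M.δ q a
  if r.2.2 then (r.2.1 :: u, r.1, v.tail)
  else (u.tail, r.1, M.trim (u.headD M.blank :: r.2.1 :: v.tail))

/-- Single-step transition relation `c ⇝ c'`. -/
def Step (M : TM S) (c c' : M.Config) : Prop := c.2.1 ≠ M.qhalt ∧ c' = M.stepFn c

/-- `n`-step transition relation `c ⇝ⁿ c'`. -/
def Steps (M : TM S) : ℕ → M.Config → M.Config → Prop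
  | 0 => fun c c' => c = c'
  | n + 1 => fun c c'' => ∃ c', M.Step c c' ∧ M.Steps n c' c''

/-- The initial configuration on input `w`. -/
def init (M : TM S) (w : List S) : M.Config := ([], M.q0, w.map M.embed)

/-- `M` is a polynomial-time Turing machine. -/
def PTime (M : TM S) : Prop :=
  ∃ a b : ℕ, 0 < a ∧ 0 < b ∧ ∀ w : List S,
    ∃ k ≤ a * w.length ^ b, ∃ c : M.Config, M.Steps k (M.init w) c ∧ c.2.1 = M.qhalt

end TM

/-- `f` is computable in polynomial time. -/
def FPTime {S : Type} (f : List S → List S) : Prop :=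
  ∃ M : TM S, M.PTime ∧
    ∀ w : List S, ∃ k : ℕ, M.Steps k (M.init w) ([], M.qhalt, (f w).map M.embed)

/-- `f` is honest: the input length is polynomially bounded in the output length. -/
def Honest {S : Type} (f : List S → List S) : Prop :=
  ∃ q : Polynomial ℕ, ∀ x : List S, x.length ≤ q.eval (f x).length

/-! ### Encodings and computed functions -/

/-- An encoding of a finite alphabet `S`: a bijection onto `{0, …, |S| − 1}`. -/
structure Encoding (S : Type) [Fintype S] where
  enc : S → ℕ
  inj : Function.Injective enc
  lt : ∀ a, enc a < Fintype.card S

/-- Encoding of strings as stacks. -/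
def Encoding.encStr {S : Type} [Fintype S] (e : Encoding S) (w : List S) : Stack :=
  w.map e.enc

/-- `T` (with input register `rin` and output register `rout`) computes `f`. -/
def Computes {S : Type} [Fintype S] (e : Encoding S) (T : Term) (rin rout : Reg)
    (f : List S → List S) : Prop :=
  ∀ x : List S, ∃ φ : Store,
    Eval T (upd emptyStore rin (e.encStr x), 0) (φ, 0) ∧ φ rout = e.encStr (f x)

/-- `T` computes `f` with zero-garbage. -/
def ComputesZG {S : Type} [Fintype S] (e : Encoding S) (T : Term) (rin rout : Reg)
    (f : List S → List S) : Prop :=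
  ∀ x : List S, ∃ φ : Store,
    Eval T (upd emptyStore rin (e.encStr x), 0) (φ, 0) ∧ φ rout = e.encStr (f x) ∧
    ∀ y : Reg, y ≠ rout → φ y = []

/-! ### Simulation of Turing machines -/

/-- The register holding the left part of the tape. -/
def lftR : Reg := 0
/-- The register holding the current state. -/
def qR : Reg := 1
/-- The register holding the right part of the tape. -/
def rgtR : Reg := 2

/-- `σ` simulates configuration `c` (written `σ ≈ c`). -/
def Sim {S : Type} (M : TM S) (encΓ : M.Γ → ℕ) (encQ : M.Q → ℕ)
    (σ : FState) (c : M.Config) : Prop :=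
  σ.2 = 0 ∧
  σ.1 lftR = c.1.map encΓ ∧
  (σ.1 qR).head? = some (encQ c.2.1) ∧
  ∃ bs : Stack, (∀ b ∈ bs, b = encΓ M.blank) ∧ σ.1 rgtR = c.2.2.map encΓ ++ bs

/-- `σ` cleanly simulates configuration `c` (written `σ ≅ c`). -/
def SimClean {S : Type} (M : TM S) (encΓ : M.Γ → ℕ) (encQ : M.Q → ℕ)
    (σ : FState) (c : M.Config) : Prop :=
  σ.2 = 0 ∧
  σ.1 lftR = c.1.map encΓ ∧
  (σ.1 qR).head? = some (encQ c.2.1) ∧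
  σ.1 rgtR = c.2.2.map encΓ

/-- The hypotheses of the simulation setup: `encΓ` is a bijection of `Γ` onto
`{0,…,n−1}` giving non-input characters larger codes than input characters,
and `encQ` is an injective encoding of states. -/
def SimSetup {S : Type} (M : TM S) (encΓ : M.Γ → ℕ) (encQ : M.Q → ℕ) : Prop :=
  Function.Injective encΓ ∧
  (∀ a : M.Γ, encΓ a < @Fintype.card M.Γ M.finΓ) ∧
  (∀ a : M.Γ, (∀ s : S, M.embed s ≠ a) → ∀ s : S, encΓ (M.embed s) < encΓ a) ∧
  Function.Injective encQ

end ForNo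

/-!
The compiled term writes `⟨⟨q₀⟩⟩` on `q` and runs `A` copies of `POW^B` on the input, which leaves
a unary clock of length `A·|w|^B` in an auxiliary register. A `FOR` over the clock then repeats a
loop-free term performing one step of `M` on `lft`, `q`, `rgt`, which does nothing once `q_HALT` is
reached. It preserves `≈`: when the head scans past the end of `rgt` a blank is first pushed there,
so `rgt` always holds the tape to the right of the head followed by some blanks. As `M` halts within
the length of the clock, the loop ends in a state `≈ c_HALT`. Finally `rgt` is copied to a buffer,
emptied, and rebuilt from the bottom of the buffer upwards, skipping blanks until the first
non-blank has been met. This removes exactly the trailing blanks, and the result is `≅ c_HALT`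
because a reachable tape never ends in a blank.
-/

theorem List.rdropWhile_append_replicate {α : Type*} {p : α → Bool} {x : α} (hx : p x)
    (l : List α) (n : ℕ) : (l ++ List.replicate n x).rdropWhile p = l.rdropWhile p := by
  induction n with
  | zero => simp
  | succ n ih =>
    rw [List.replicate_succ', ← List.append_assoc, List.rdropWhile_concat_pos _ _ _ hx, ih]

theorem List.exists_headD_cons_tail_append_replicate {α : Type*} (v : List α) (b : α) (n : ℕ) :
    ∃ m, (v ++ List.replicate n b).headD b :: (v ++ List.replicate n b).tail =
      v.headD b :: (v.tail ++ List.replicate m b) := by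
  rcases v with _ | ⟨a, v⟩
  · rcases n with _ | n
    exacts [⟨0, rfl⟩, ⟨n, rfl⟩]
  · exact ⟨n, rfl⟩

namespace ForNo

infixr:60 " ⨟ " => Term.seq

@[simp] theorem upd_self (φ : Store) (x : Reg) (s : Stack) : upd φ x s x = s := by
  simp [upd]

@[simp] theorem upd_of_ne (φ : Store) {x y : Reg} (s : Stack) (h : y ≠ x) : upd φ x s y = φ y :=
  if_neg h

@[simp] theorem upd_upd_self (φ : Store) (x : Reg) (s s' : Stack) :
    upd (upd φ x s) x s' = upd φ x s' := by
  funext y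
  by_cases h : y = x <;> simp [h]

@[simp] theorem upd_eq_self (φ : Store) (x : Reg) : upd φ x (φ x) = φ := by
  funext y
  by_cases h : y = x <;> simp [h]

theorem eval_push (n : ℕ) (x : Reg) (φ : Store) :
    Eval (.push n x) (φ, 0) (upd φ x (n :: φ x), 0) :=
  Eval.push n x φ 0

theorem eval_pop {n : ℕ} {x : Reg} {φ : Store} {s : Stack} (h : φ x = n :: s) :
    Eval (.pop n x) (φ, 0) (upd φ x s, 0) := by
  simpa [popOp, h] using Eval.pop n x φ 0

theorem Bodies.writes_iff : ∀ (ps : Bodies) {y : Reg}, ps.Writes y ↔ ∃ i, (ps.get i).Writes y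
  | .single _, _ => ⟨fun h => ⟨0, h⟩, fun ⟨_, h⟩ => h⟩
  | .cons _ ps, _ => by
    simp only [Bodies.Writes, ps.writes_iff]
    constructor
    · rintro (h | ⟨i, h⟩)
      exacts [⟨0, h⟩, ⟨i + 1, h⟩]
    · rintro ⟨_ | i, h⟩
      exacts [.inl h, .inr ⟨i, h⟩]

theorem Bodies.leads_iff : ∀ (ps : Bodies) {y : Reg}, ps.Leads y ↔ ∃ i, (ps.get i).Leads y
  | .single _, _ => ⟨fun h => ⟨0, h⟩, fun ⟨_, h⟩ => h⟩
  | .cons _ ps, _ => by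
    simp only [Bodies.Leads, ps.leads_iff]
    constructor
    · rintro (h | ⟨i, h⟩)
      exacts [⟨0, h⟩, ⟨i + 1, h⟩]
    · rintro ⟨_ | i, h⟩
      exacts [.inl h, .inr ⟨i, h⟩]

theorem Bodies.safe_iff : ∀ ps : Bodies, ps.Safe ↔ ∀ i, (ps.get i).Safe
  | .single _ => ⟨fun h _ => h, fun h => h 0⟩
  | .cons _ ps => by
    simp only [Bodies.Safe, ps.safe_iff]
    exact ⟨fun h i => i.casesOn h.1 h.2, fun h => ⟨h 0, fun i => h (i + 1)⟩⟩

theorem Bodies.wf_iff : ∀ ps : Bodies, ps.WF ↔ ∀ i, (ps.get i).WF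
  | .single _ => ⟨fun h _ => h, fun h => h 0⟩
  | .cons _ ps => by
    simp only [Bodies.WF, ps.wf_iff]
    exact ⟨fun h i => i.casesOn h.1 h.2, fun h => ⟨h 0, fun i => h (i + 1)⟩⟩

theorem get_mkBodiesAux (g : ℕ → Term) :
    ∀ k j i : ℕ, (mkBodiesAux g j k).get i = g (j + min i k)
  | 0, _, _ => by simp [mkBodiesAux, Bodies.get]
  | _ + 1, _, 0 => by simp [mkBodiesAux, Bodies.get]
  | k + 1, j, i + 1 => by
    simp only [mkBodiesAux, Bodies.get, get_mkBodiesAux g k (j + 1) i]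
    congr 1
    omega

@[simp] theorem get_mkBodies (g : ℕ → Term) (k i : ℕ) :
    (mkBodies g k).get i = g (min i k) := by
  simp [mkBodies, get_mkBodiesAux]

mutual
theorem Eval.apply_eq_of_not_writes {t : Term} {σ σ' : FState} {y : Reg} :
    Eval t σ σ' → ¬ t.Writes y → σ'.1 y = σ.1 y
  | .skip _, _ => rfl
  | .seq h₁ h₂, hy => by
    simp only [Term.Writes, not_or] at hy
    rw [h₂.apply_eq_of_not_writes hy.2, h₁.apply_eq_of_not_writes hy.1]
  | .push _ _ _ _, hy => if_neg (Ne.symm hy)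
  | .pop _ _ _ _, hy => if_neg (Ne.symm hy)
  | .ifeq_true _ h, hy => h.apply_eq_of_not_writes hy
  | .ifeq_false _ _ _, _ => rfl
  | .normal h, hy => h.apply_eq_of_not_writes hy
  | .fort h, hy => h.apply_eq_of_not_writes hy
  | .roft h, hy => h.apply_eq_of_not_writes hy
theorem EvalList.apply_eq_of_not_writes {s : Stack} {ps : Bodies} {σ σ' : FState} {y : Reg} :
    EvalList s ps σ σ' → ¬ ps.Writes y → σ'.1 y = σ.1 y
  | .nil _ _, _ => rfl
  | .cons (i := i) h₁ h₂, hy => by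
    rw [h₂.apply_eq_of_not_writes hy,
      h₁.apply_eq_of_not_writes fun h => hy (ps.writes_iff.2 ⟨i, h⟩)]
end

theorem EvalList.single_of_simulation {α : Type*} {t : Term} (R : α → FState → Prop)
    (g : α → α) (hstep : ∀ a σ, R a σ → ∃ σ', Eval t σ σ' ∧ R (g a) σ') :
    ∀ (l : Stack) (a : α) (σ : FState), R a σ →
      ∃ σ', EvalList l (.single t) σ σ' ∧ R (g^[l.length] a) σ'
  | [], _, σ, h => ⟨σ, .nil _ _, h⟩
  | _ :: l, a, σ, h => by
    obtain ⟨σ₁, h₁, hR₁⟩ := hstep a σ h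
    obtain ⟨σ', h', hR'⟩ := single_of_simulation R g hstep l (g a) σ₁ hR₁
    exact ⟨σ', .cons h₁ h', hR'⟩

/-! ### Dispatching on the head of a register -/

section Dispatch

variable {α : Type*} (r : Reg) (v : α → ℕ) (B : α → Term)

def dispatchList : List α → Term
  | [] => .skip
  | a :: l => .ifeq r (v a) (B a) ⨟ dispatchList l

noncomputable def dispatch [Fintype α] : Term := dispatchList r v B Finset.univ.toList

variable {r v B}

@[simp] theorem dispatchList_writes {l : List α} {y : Reg} :
    (dispatchList r v B l).Writes y ↔ ∃ a ∈ l, (B a).Writes y := by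
  induction l <;> simp_all [dispatchList, Term.Writes]

@[simp] theorem dispatchList_leads {l : List α} {y : Reg} :
    (dispatchList r v B l).Leads y ↔ ∃ a ∈ l, (B a).Leads y := by
  induction l <;> simp_all [dispatchList, Term.Leads]

@[simp] theorem dispatchList_safe {l : List α} :
    (dispatchList r v B l).Safe ↔ ∀ a ∈ l, (B a).Safe := by
  induction l <;> simp_all [dispatchList, Term.Safe]

@[simp] theorem dispatchList_wf {l : List α} :
    (dispatchList r v B l).WF ↔ ∀ a ∈ l, (B a).WF ∧ ¬ (B a).Writes r := by
  induction l <;> simp_all [dispatchList, Term.WF]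

theorem eval_dispatchList_of_forall_ne {l : List α} {φ : Store} {c : ℕ}
    (h : ∀ a ∈ l, (φ r).head? ≠ some (v a)) :
    Eval (dispatchList r v B l) (φ, c) (φ, c) := by
  induction l with
  | nil => exact .skip _
  | cons a l ih =>
    simp only [List.mem_cons, forall_eq_or_imp] at h
    exact .seq (.ifeq_false φ c h.1) (ih h.2)

theorem eval_dispatchList_of_head {l : List α} {φ : Store} {c : ℕ} {σ' : FState} {a : α}
    (hl : l.Nodup) (ha : a ∈ l) (hv : Function.Injective v)
    (hhead : (φ r).head? = some (v a)) (hB : ∀ b, ¬ (B b).Writes r)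
    (h : Eval (B a) (φ, c) σ') : Eval (dispatchList r v B l) (φ, c) σ' := by
  induction l with
  | nil => cases ha
  | cons b l ih =>
    rw [List.nodup_cons] at hl
    by_cases hab : b = a
    · subst hab
      obtain ⟨φ', c'⟩ := σ'
      have hr : φ' r = φ r := h.apply_eq_of_not_writes (hB b)
      refine .seq (.ifeq_true hhead h) (eval_dispatchList_of_forall_ne fun a' ha' => ?_)
      rw [hr, hhead, ne_eq, Option.some_inj]
      exact fun he => hl.1 (hv he ▸ ha')
    · refine .seq (.ifeq_false φ c ?_) (ih hl.2 ((List.mem_cons.1 ha).resolve_left (Ne.symm hab)))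
      rw [hhead, ne_eq, Option.some_inj]
      exact fun he => hab (hv he).symm

theorem eval_dispatch_of_forall_ne [Fintype α] {φ : Store} {c : ℕ}
    (h : ∀ a, (φ r).head? ≠ some (v a)) : Eval (dispatch r v B) (φ, c) (φ, c) :=
  eval_dispatchList_of_forall_ne fun a _ => h a

theorem eval_dispatch_of_head [Fintype α] {φ : Store} {c : ℕ} {σ' : FState} {a : α}
    (hv : Function.Injective v) (hhead : (φ r).head? = some (v a))
    (hB : ∀ b, ¬ (B b).Writes r) (h : Eval (B a) (φ, c) σ') :
    Eval (dispatch r v B) (φ, c) σ' :=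
  eval_dispatchList_of_head (Finset.nodup_toList _) (Finset.mem_toList.2 (Finset.mem_univ a))
    hv hhead hB h

end Dispatch

/-! ### Counting, copying and stripping loops -/

theorem eval_powNest {x p : Reg} (hpx : p ≠ x) : ∀ (n : ℕ) (φ : Store),
    Eval (powNest x p n) (φ, 0) (upd φ p (List.replicate ((φ x).length ^ n) 1 ++ φ p), 0)
  | 0, φ => by simpa [powNest] using eval_push 1 p φ
  | n + 1, φ => by
    obtain ⟨σ', h, rfl⟩ := EvalList.single_of_simulation
      (fun m σ => σ = (upd φ p (List.replicate m 1 ++ φ p), 0)) ((φ x).length ^ n + ·)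
      (fun m σ hσ => ⟨_, hσ ▸ eval_powNest hpx n _, by simp [hpx.symm, ← List.append_assoc]⟩)
      (φ x) 0 (φ, 0) (by simp)
    refine .fort ?_
    simpa [pow_succ, mul_comm] using h

theorem eval_iterSeq_POW {x p : Reg} (hpx : p ≠ x) (b : ℕ) : ∀ (a : ℕ) (φ : Store),
    Eval (iterSeq (POW x p b) a) (φ, 0)
      (upd φ p (List.replicate (a * (φ x).length ^ b) 1 ++ φ p), 0)
  | 0, φ => by simpa [iterSeq] using Eval.skip (φ, 0)
  | 1, φ => by simpa [iterSeq, POW] using (eval_powNest hpx b φ).normal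
  | a + 2, φ => by
    refine .seq (eval_powNest hpx b φ).normal ?_
    have h := eval_iterSeq_POW hpx b (a + 1)
      (upd φ p (List.replicate ((φ x).length ^ b) 1 ++ φ p))
    rw [upd_upd_self, upd_of_ne _ _ hpx.symm, upd_self, ← List.append_assoc,
      List.replicate_append_replicate] at h
    convert h using 5
    ring

theorem evalList_push {y : Reg} {K : ℕ} : ∀ {l : Stack} (φ : Store), (∀ i ∈ l, i ≤ K) →
    EvalList l (mkBodies (fun i => .push i y) K) (φ, 0) (upd φ y (l.reverse ++ φ y), 0)
  | [], φ, _ => by simpa using EvalList.nil _ (φ, 0)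
  | i :: l, φ, hl => by
    simp only [List.mem_cons, forall_eq_or_imp] at hl
    refine .cons (by simpa [hl.1] using eval_push i y φ) ?_
    simpa using evalList_push (y := y) (K := K) (upd φ y (i :: φ y)) hl.2

theorem evalList_pop {y : Reg} {K : ℕ} : ∀ {l s : Stack} {φ : Store}, (∀ i ∈ l, i ≤ K) →
    φ y = l ++ s → EvalList l (mkBodies (fun i => .pop i y) K) (φ, 0) (upd φ y s, 0)
  | [], s, φ, _, h => by
    rw [List.nil_append] at h
    simpa [← h] using EvalList.nil _ (φ, 0)
  | i :: l, s, φ, hl, h => by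
    simp only [List.mem_cons, forall_eq_or_imp] at hl
    refine .cons (by simpa [hl.1] using eval_pop h) ?_
    simpa using evalList_pop hl.2 (upd_self φ y (l ++ s))

theorem eval_COPY {x y : Reg} {K : ℕ} {φ : Store} (h : ∀ i ∈ φ x, i ≤ K) :
    Eval (COPY x y K) (φ, 0) (upd φ y (φ x ++ φ y), 0) := by
  refine .normal (.roft ?_)
  simpa using evalList_push φ (l := (φ x).reverse) (by simpa using h)

def clockR : Reg := 3
def codeR : Reg := 4
def scanR : Reg := 5
def bufR : Reg := 6
def flagR : Reg := 7

section Strip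

variable {b K : ℕ}

/-- `flagR` becomes nonempty at the first non-blank met; as the loop runs bottom-up, exactly the
trailing blanks of the tape are dropped. -/
def stripBody (b i : ℕ) : Term :=
  if i = b then .ifeq flagR 1 (.push b rgtR) else .push 1 flagR ⨟ .push i rgtR

def stripBlanks (b K : ℕ) : Term :=
  COPY rgtR bufR K ⨟
  .normal [bufR] (.fort bufR (mkBodies (fun i => .pop i rgtR) K)) ⨟
  .normal [bufR] (.roft bufR (mkBodies (stripBody b) K))

theorem eval_stripBody_of_ne {i : ℕ} (hi : i ≠ b) (φ : Store) :
    Eval (stripBody b i) (φ, 0) (upd (upd φ flagR (1 :: φ flagR)) rgtR (i :: φ rgtR), 0) := by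
  rw [stripBody, if_neg hi]
  simpa +decide using (eval_push 1 flagR φ).seq (eval_push i rgtR _)

theorem evalList_stripBody_of_flag : ∀ {l : Stack} {φ : Store}, (φ flagR).head? = some 1 →
    (∀ i ∈ l, i ≤ K) → ∃ φ', EvalList l (mkBodies (stripBody b) K) (φ, 0) (φ', 0) ∧
      φ' rgtR = l.reverse ++ φ rgtR
  | [], φ, _, _ => ⟨φ, .nil _ _, rfl⟩
  | i :: l, φ, hf, hl => by
    simp only [List.mem_cons, forall_eq_or_imp] at hl
    have hbody : (mkBodies (stripBody b) K).get i = stripBody b i := by simp [hl.1]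
    by_cases hi : i = b
    · obtain ⟨φ', h, hr⟩ := evalList_stripBody_of_flag (φ := upd φ rgtR (i :: φ rgtR))
        (by simpa +decide using hf) hl.2
      refine ⟨φ', .cons ?_ h, by simp [hr]⟩
      rw [hbody, stripBody, if_pos hi, hi]
      exact .ifeq_true hf (eval_push b rgtR φ)
    · obtain ⟨φ', h, hr⟩ := evalList_stripBody_of_flag
        (φ := upd (upd φ flagR (1 :: φ flagR)) rgtR (i :: φ rgtR)) (by simp +decide) hl.2
      exact ⟨φ', .cons (hbody ▸ eval_stripBody_of_ne hi φ) h, by simp +decide [hr]⟩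

theorem evalList_stripBody : ∀ {l : Stack} {φ : Store}, φ flagR = [] → (∀ i ∈ l, i ≤ K) →
    ∃ φ', EvalList l (mkBodies (stripBody b) K) (φ, 0) (φ', 0) ∧
      φ' rgtR = (l.dropWhile (· == b)).reverse ++ φ rgtR
  | [], φ, _, _ => ⟨φ, .nil _ _, rfl⟩
  | i :: l, φ, hf, hl => by
    simp only [List.mem_cons, forall_eq_or_imp] at hl
    have hbody : (mkBodies (stripBody b) K).get i = stripBody b i := by simp [hl.1]
    by_cases hi : i = b
    · obtain ⟨φ', h, hr⟩ := evalList_stripBody (φ := φ) hf hl.2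
      refine ⟨φ', .cons ?_ h, by simp [hr, hi]⟩
      rw [hbody, stripBody, if_pos hi]
      exact .ifeq_false φ 0 (by simp [hf])
    · obtain ⟨φ', h, hr⟩ := evalList_stripBody_of_flag
        (φ := upd (upd φ flagR (1 :: φ flagR)) rgtR (i :: φ rgtR)) (by simp +decide) hl.2
      exact ⟨φ', .cons (hbody ▸ eval_stripBody_of_ne hi φ) h, by simp +decide [hr, hi]⟩

theorem eval_stripBlanks {φ : Store} (hK : ∀ i ∈ φ rgtR, i ≤ K) (hbuf : φ bufR = [])
    (hflag : φ flagR = []) :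
    ∃ φ', Eval (stripBlanks b K) (φ, 0) (φ', 0) ∧ φ' rgtR = (φ rgtR).rdropWhile (· == b) := by
  set φ₁ := upd φ bufR (φ rgtR) with hφ₁
  have hcopy : Eval (COPY rgtR bufR K) (φ, 0) (φ₁, 0) := by
    simpa [hbuf] using eval_COPY (y := bufR) hK
  have hpop : EvalList (φ₁ bufR) (mkBodies (fun i => .pop i rgtR) K) (φ₁, 0)
      (upd φ₁ rgtR [], 0) :=
    evalList_pop (by simpa [hφ₁] using hK) (by simp +decide [hφ₁])
  obtain ⟨φ', hclean, hr⟩ := evalList_stripBody (b := b) (K := K) (φ := upd φ₁ rgtR [])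
    (l := (φ rgtR).reverse) (by simp +decide [hφ₁, hflag]) (by simpa using hK)
  refine ⟨φ', hcopy.seq ((Eval.fort hpop).normal.seq (.normal (.roft ?_))), ?_⟩
  · simpa +decide [hφ₁] using hclean
  · simpa [List.rdropWhile] using hr

end Strip

/-! ### Turing machines -/

namespace TM

variable {S : Type} (M : TM S)

instance : Fintype M.Γ := M.finΓ
instance : Fintype M.Q := M.finQ
instance : DecidableEq M.Γ := M.decΓ

open Classical in
noncomputable def haltStep (c : M.Config) : M.Config :=
  if c.2.1 = M.qhalt then c else M.stepFn c

variable {M}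

theorem Steps.iterate_haltStep_eq : ∀ {k n : ℕ} {c c' : M.Config}, M.Steps k c c' →
    c'.2.1 = M.qhalt → k ≤ n → M.haltStep^[n] c = c'
  | 0, n, c, _, rfl, hc, _ => Function.iterate_fixed (by simp [haltStep, hc]) n
  | k + 1, n + 1, c, _, ⟨_, ⟨hc, rfl⟩, h⟩, hc', hkn => by
    rw [Function.iterate_succ_apply, haltStep, if_neg hc]
    exact h.iterate_haltStep_eq hc' (by omega)

theorem trim_eq_rdropWhile (l : List M.Γ) :
    M.trim l = l.rdropWhile (fun a => decide (a = M.blank)) := rfl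

theorem trim_eq_self_iff {l : List M.Γ} :
    M.trim l = l ↔ ∀ h : l ≠ [], l.getLast h ≠ M.blank := by
  simp [trim_eq_rdropWhile, List.rdropWhile_eq_self_iff]

theorem exists_eq_trim_append_replicate (l : List M.Γ) :
    ∃ n, l = M.trim l ++ List.replicate n M.blank := by
  refine ⟨(l.rtakeWhile fun a => decide (a = M.blank)).length, ?_⟩
  rw [← List.eq_replicate_iff.2 ⟨rfl, fun a ha => by simpa using List.mem_rtakeWhile_imp ha⟩]
  exact List.rdropWhile_append_rtakeWhile.symm

theorem trim_tail {v : List M.Γ} (h : M.trim v = v) : M.trim v.tail = v.tail := by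
  rw [trim_eq_self_iff] at h ⊢
  intro ht
  rw [List.getLast_tail]
  exact h _

theorem trim_stepFn_tape {c : M.Config} (h : M.trim c.2.2 = c.2.2) :
    M.trim (M.stepFn c).2.2 = (M.stepFn c).2.2 := by
  dsimp only [stepFn]
  split
  · exact trim_tail h
  · exact List.rdropWhile_idempotent _ _

theorem trim_iterate_haltStep_init (w : List S) (n : ℕ) :
    M.trim (M.haltStep^[n] (M.init w)).2.2 = (M.haltStep^[n] (M.init w)).2.2 := by
  refine Function.Iterate.rec (fun c : M.Config => M.trim c.2.2 = c.2.2) ?_ (fun c hc => ?_) n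
  · rw [init, trim_eq_self_iff]
    intro h
    rw [List.getLast_map]
    exact M.blank_notin _
  · unfold haltStep
    split
    exacts [hc, trim_stepFn_tape hc]

end TM

/-! ### Simulating the machine -/

section Compile

variable {S : Type} (M : TM S) (eΓ : M.Γ → ℕ) (eQ : M.Q → ℕ)

/-- The sentinel `Fintype.card M.Γ` is the code of no symbol, so it is left on top of `scanR`
exactly when `x` is empty. -/
noncomputable def readHead (x : Reg) : Term :=
  .push (Fintype.card M.Γ) scanR ⨟ dispatch x eΓ (fun c => .push (eΓ c) scanR)

noncomputable def fillBlank (x : Reg) : Term :=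
  readHead M eΓ x ⨟ .ifeq scanR (Fintype.card M.Γ) (.push (eΓ M.blank) x)

noncomputable def moveHead (x y : Reg) : Term :=
  fillBlank M eΓ x ⨟ readHead M eΓ x ⨟
    dispatch scanR eΓ (fun c => .pop (eΓ c) x ⨟ .push (eΓ c) y)

/-- Never `0`, the value `simStep` first pushes on `codeR`: in the halting state, where
`scanSymbol` pushes nothing, no transition fires. -/
def pairCode (q : M.Q) (a : M.Γ) : ℕ := Nat.pair (eQ q) (eΓ a) + 1

noncomputable def transition (q : M.Q) (a : M.Γ) : Term :=
  .pop (eΓ a) rgtR ⨟ .push (eQ (M.δ q a).1) qR ⨟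
    if (M.δ q a).2.2 then .push (eΓ (M.δ q a).2.1) lftR
    else .push (eΓ (M.δ q a).2.1) rgtR ⨟ moveHead M eΓ lftR rgtR

open Classical in
noncomputable def scanSymbol (q : M.Q) : Term :=
  if q = M.qhalt then .skip
  else fillBlank M eΓ rgtR ⨟ dispatch rgtR eΓ (fun a => .push (pairCode M eΓ eQ q a) codeR)

noncomputable def simStep : Term :=
  .push 0 codeR ⨟ dispatch qR eQ (scanSymbol M eΓ eQ) ⨟
  dispatch codeR (fun p : M.Q × M.Γ => pairCode M eΓ eQ p.1 p.2)
    (fun p => transition M eΓ eQ p.1 p.2)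

noncomputable def setup (a b : ℕ) : Term := .push (eQ M.q0) qR ⨟ iterSeq (POW rgtR clockR b) a

noncomputable def compile (a b : ℕ) : Term :=
  setup M eQ a b ⨟ .normal [clockR] (.fort clockR (.single (simStep M eΓ eQ))) ⨟
  stripBlanks (eΓ M.blank) (Fintype.card M.Γ)

variable {M eΓ eQ}

@[simp] theorem readHead_writes {x y : Reg} : (readHead M eΓ x).Writes y ↔ scanR = y := by
  simp [readHead, dispatch, Term.Writes]

@[simp] theorem fillBlank_writes {x y : Reg} :
    (fillBlank M eΓ x).Writes y ↔ scanR = y ∨ x = y := by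
  simp [fillBlank, Term.Writes]

@[simp] theorem moveHead_writes {x y z : Reg} :
    (moveHead M eΓ x y).Writes z ↔ scanR = z ∨ x = z ∨ y = z := by
  simp [moveHead, dispatch, Term.Writes, show Nonempty M.Γ from ⟨M.blank⟩]
  tauto

theorem transition_writes {q : M.Q} {a : M.Γ} {y : Reg}
    (h : (transition M eΓ eQ q a).Writes y) : y ∈ [rgtR, qR, lftR, scanR] := by
  unfold transition at h
  split at h <;> simp [Term.Writes] at h <;> simp only [List.mem_cons] <;> tauto

theorem scanSymbol_writes {q : M.Q} {y : Reg} (h : (scanSymbol M eΓ eQ q).Writes y) :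
    y ∈ [scanR, rgtR, codeR] := by
  unfold scanSymbol at h
  split at h
  · exact h.elim
  · simp [Term.Writes, dispatch] at h
    simp only [List.mem_cons]
    tauto

theorem simStep_writes {y : Reg} (h : (simStep M eΓ eQ).Writes y) :
    y ∈ [codeR, rgtR, qR, lftR, scanR] := by
  simp only [simStep, Term.Writes, dispatch, dispatchList_writes, Finset.mem_toList,
    Finset.mem_univ, true_and] at h
  rcases h with h | ⟨_, h⟩ | ⟨_, h⟩
  · simp [h]
  · have := scanSymbol_writes h
    simp only [List.mem_cons] at this ⊢
    tauto
  · have := transition_writes h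
    simp only [List.mem_cons] at this ⊢
    tauto

end Compile

section Simulation

variable {S : Type} {M : TM S} {eΓ : M.Γ → ℕ} {eQ : M.Q → ℕ}

theorem sim_iff {φ : Store} {c : M.Config} :
    Sim M eΓ eQ (φ, 0) c ↔ φ lftR = c.1.map eΓ ∧ (φ qR).head? = some (eQ c.2.1) ∧
      ∃ n, φ rgtR = (c.2.2 ++ List.replicate n M.blank).map eΓ := by
  simp only [Sim, true_and, List.map_append, List.map_replicate]
  refine and_congr_right fun _ => and_congr_right fun _ => ⟨?_, ?_⟩
  · rintro ⟨bs, hbs, h⟩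
    exact ⟨bs.length, by rw [h, ← List.eq_replicate_iff.2 ⟨rfl, hbs⟩]⟩
  · rintro ⟨n, h⟩
    exact ⟨_, fun _ => List.eq_of_mem_replicate, h⟩

theorem eval_readHead_nil {x : Reg} (hxs : x ≠ scanR) {φ : Store} (hx : φ x = []) :
    Eval (readHead M eΓ x) (φ, 0) (upd φ scanR (Fintype.card M.Γ :: φ scanR), 0) :=
  (eval_push _ _ _).seq (eval_dispatch_of_forall_ne fun c => by simp [hxs, hx])

theorem eval_readHead_cons (hΓinj : Function.Injective eΓ) {x : Reg} (hxs : x ≠ scanR)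
    {φ : Store} {a : M.Γ} {s : Stack} (hx : φ x = eΓ a :: s) :
    Eval (readHead M eΓ x) (φ, 0) (upd φ scanR (eΓ a :: Fintype.card M.Γ :: φ scanR), 0) := by
  refine (eval_push _ _ _).seq (eval_dispatch_of_head hΓinj (a := a) (by simp [hxs, hx])
    (fun c => by simpa [Term.Writes] using hxs.symm) ?_)
  simpa using eval_push (eΓ a) scanR (upd φ scanR (Fintype.card M.Γ :: φ scanR))

theorem eval_fillBlank (hΓinj : Function.Injective eΓ)
    (hΓlt : ∀ c, eΓ c < Fintype.card M.Γ) {x : Reg} (hxs : x ≠ scanR) {φ : Store}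
    {L : List M.Γ} (hx : φ x = L.map eΓ) :
    ∃ φ', Eval (fillBlank M eΓ x) (φ, 0) (φ', 0) ∧
      φ' x = (L.headD M.blank :: L.tail).map eΓ := by
  rcases L with _ | ⟨a, L⟩
  · refine ⟨_, (eval_readHead_nil hxs hx).seq (.ifeq_true (by simp) (eval_push _ _ _)), ?_⟩
    simp [hxs, hx]
  · refine ⟨_, (eval_readHead_cons hΓinj hxs hx).seq (.ifeq_false _ _ ?_), by simp [hxs, hx]⟩
    simpa using (hΓlt a).ne

theorem eval_moveHead (hΓinj : Function.Injective eΓ)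
    (hΓlt : ∀ c, eΓ c < Fintype.card M.Γ) {x y : Reg} (hxy : x ≠ y) (hxs : x ≠ scanR)
    (hys : y ≠ scanR) {φ : Store} {L : List M.Γ} (hx : φ x = L.map eΓ) :
    ∃ φ', Eval (moveHead M eΓ x y) (φ, 0) (φ', 0) ∧
      φ' x = L.tail.map eΓ ∧ φ' y = eΓ (L.headD M.blank) :: φ y := by
  obtain ⟨φ₁, hfill, hx₁⟩ := eval_fillBlank hΓinj hΓlt hxs hx
  have hy₁ : φ₁ y = φ y := hfill.apply_eq_of_not_writes (by simp [hxy, hys.symm])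
  rw [List.map_cons] at hx₁
  have hread := eval_readHead_cons hΓinj hxs hx₁
  have hpop := eval_pop (n := eΓ (L.headD M.blank)) (x := x) (s := L.tail.map eΓ)
    (φ := upd φ₁ scanR (eΓ (L.headD M.blank) :: Fintype.card M.Γ :: φ₁ scanR))
    (by simp [hxs, hx₁])
  refine ⟨_, hfill.seq (hread.seq (eval_dispatch_of_head hΓinj (by simp) (fun c => ?_)
    (hpop.seq (eval_push _ y _)))), by simp [hxy], by simp [hxy.symm, hys, hy₁]⟩
  simp [Term.Writes, hxs, hys]

theorem eval_transition (hΓinj : Function.Injective eΓ) (hΓlt : ∀ c, eΓ c < Fintype.card M.Γ)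
    {φ : Store} {u v : List M.Γ} {q : M.Q} {n : ℕ} (hl : φ lftR = u.map eΓ)
    (hr : φ rgtR = (v.headD M.blank :: (v.tail ++ List.replicate n M.blank)).map eΓ) :
    ∃ φ', Eval (transition M eΓ eQ q (v.headD M.blank)) (φ, 0) (φ', 0) ∧
      Sim M eΓ eQ (φ', 0) (M.stepFn (u, q, v)) := by
  set a := v.headD M.blank
  have hstep : M.stepFn (u, q, v) =
      if (M.δ q a).2.2 then ((M.δ q a).2.1 :: u, (M.δ q a).1, v.tail)
      else (u.tail, (M.δ q a).1, M.trim (u.headD M.blank :: (M.δ q a).2.1 :: v.tail)) := rfl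
  set φ₁ := upd φ rgtR ((v.tail ++ List.replicate n M.blank).map eΓ) with hφ₁
  have hpop : Eval (.pop (eΓ a) rgtR) (φ, 0) (φ₁, 0) := eval_pop (by rw [hr, List.map_cons])
  unfold transition
  rcases hδ : M.δ q a with ⟨q', a', _ | _⟩ <;>
    simp only [hδ, Bool.false_eq_true, ↓reduceIte] at hstep ⊢
  · set φ₂ := upd φ₁ qR (eQ q' :: φ₁ qR) with hφ₂
    obtain ⟨φ', hmove, hl', hr'⟩ := eval_moveHead hΓinj hΓlt (x := lftR) (y := rgtR)
      (by decide) (by decide) (by decide) (φ := upd φ₂ rgtR (eΓ a' :: φ₂ rgtR)) (L := u)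
      (by simp +decide [hφ₂, hφ₁, hl])
    have hq' : φ' qR = _ := hmove.apply_eq_of_not_writes (by simp +decide)
    obtain ⟨m, hm⟩ := M.exists_eq_trim_append_replicate (u.headD M.blank :: a' :: v.tail)
    refine ⟨φ', hpop.seq ((eval_push _ _ _).seq ((eval_push _ _ _).seq hmove)), ?_⟩
    rw [sim_iff, hstep]
    refine ⟨hl', by simp +decide [hq', hφ₂], m + n, ?_⟩
    rw [hr', ← List.replicate_append_replicate, ← List.append_assoc, ← hm]
    simp +decide [hφ₂, hφ₁]
  · refine ⟨_, hpop.seq ((eval_push _ _ _).seq (eval_push _ _ _)), ?_⟩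
    rw [sim_iff, hstep]
    exact ⟨by simp +decide [hφ₁, hl], by simp +decide, n, by simp +decide [hφ₁]⟩

theorem eval_scanSymbol (hΓinj : Function.Injective eΓ) (hΓlt : ∀ c, eΓ c < Fintype.card M.Γ)
    {q : M.Q} (hq : q ≠ M.qhalt) {φ : Store} {v : List M.Γ} {n : ℕ}
    (hr : φ rgtR = (v ++ List.replicate n M.blank).map eΓ) :
    ∃ φ' m, Eval (scanSymbol M eΓ eQ q) (φ, 0) (φ', 0) ∧
      (φ' codeR).head? = some (pairCode M eΓ eQ q (v.headD M.blank)) ∧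
      φ' rgtR = (v.headD M.blank :: (v.tail ++ List.replicate m M.blank)).map eΓ ∧
      φ' lftR = φ lftR := by
  obtain ⟨m, hm⟩ := List.exists_headD_cons_tail_append_replicate v M.blank n
  obtain ⟨φ₁, hfill, hr₁⟩ := eval_fillBlank hΓinj hΓlt (x := rgtR) (by decide) hr
  rw [hm] at hr₁
  have hl₁ : φ₁ lftR = φ lftR := hfill.apply_eq_of_not_writes (by simp +decide)
  refine ⟨upd φ₁ codeR (pairCode M eΓ eQ q (v.headD M.blank) :: φ₁ codeR), m, ?_, by simp,
    by rw [upd_of_ne _ _ (by decide), hr₁], by simp +decide [hl₁]⟩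
  rw [scanSymbol, if_neg hq]
  exact hfill.seq (eval_dispatch_of_head hΓinj (by rw [hr₁]; rfl)
    (fun _ => by simp +decide [Term.Writes]) (eval_push _ _ _))

theorem pairCode_injective (hΓinj : Function.Injective eΓ) (hQinj : Function.Injective eQ) :
    Function.Injective fun p : M.Q × M.Γ => pairCode M eΓ eQ p.1 p.2 := by
  rintro ⟨q, a⟩ ⟨q', a'⟩ h
  simp only [pairCode, add_left_inj, Nat.pair_eq_pair] at h
  rw [hQinj h.1, hΓinj h.2]

theorem eval_simStep (hΓinj : Function.Injective eΓ) (hΓlt : ∀ c, eΓ c < Fintype.card M.Γ)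
    (hQinj : Function.Injective eQ) {φ : Store} {c : M.Config} (hσ : Sim M eΓ eQ (φ, 0) c) :
    ∃ φ', Eval (simStep M eΓ eQ) (φ, 0) (φ', 0) ∧ Sim M eΓ eQ (φ', 0) (M.haltStep c) := by
  obtain ⟨u, q, v⟩ := c
  obtain ⟨hl, hq, n, hr⟩ := sim_iff.1 hσ
  set φ₁ := upd φ codeR (0 :: φ codeR) with hφ₁
  have hq₁ : (φ₁ qR).head? = some (eQ q) := by simp +decide [hφ₁, hq]
  have hscan : ∀ q', ¬ (scanSymbol M eΓ eQ q').Writes qR :=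
    fun _ h => absurd (scanSymbol_writes h) (by decide)
  have htrans : ∀ p : M.Q × M.Γ, ¬ (transition M eΓ eQ p.1 p.2).Writes codeR :=
    fun _ h => absurd (transition_writes h) (by decide)
  by_cases hhalt : q = M.qhalt
  · refine ⟨φ₁, (eval_push _ _ _).seq ((eval_dispatch_of_head hQinj hq₁ hscan ?_).seq
      (eval_dispatch_of_forall_ne fun p => by simp [hφ₁, pairCode])), ?_⟩
    · rw [scanSymbol, if_pos hhalt]
      exact .skip _
    · rw [TM.haltStep, if_pos hhalt, sim_iff]
      exact ⟨by simp +decide [hφ₁, hl], hq₁, n, by simp +decide [hφ₁, hr]⟩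
  · obtain ⟨φ₂, m, hread, hcode, hr₂, hl₂⟩ :=
      eval_scanSymbol (eQ := eQ) hΓinj hΓlt hhalt (φ := φ₁) (v := v) (n := n)
        (by simp +decide [hφ₁, hr])
    obtain ⟨φ', htransition, hsim⟩ := eval_transition (eQ := eQ) hΓinj hΓlt (u := u) (q := q)
      (by simp +decide [hl₂, hφ₁, hl]) hr₂
    refine ⟨φ', (eval_push _ _ _).seq ((eval_dispatch_of_head hQinj hq₁ hscan hread).seq
      (eval_dispatch_of_head (pairCode_injective hΓinj hQinj) (a := (q, v.headD M.blank)) hcode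
        htrans htransition)), ?_⟩
    rwa [TM.haltStep, if_neg hhalt]

end Simulation

/-! ### Well-formedness -/

theorem inForNo_seq {t u : Term} : InForNo (t ⨟ u) ↔ InForNo t ∧ InForNo u := by
  simp only [InForNo, Term.Raw, Term.WF]
  tauto

theorem inForNo_normal {xs : List Reg} {t : Term} :
    InForNo (.normal xs t) ↔
      t.Safe ∧ t.WF ∧ (∀ x ∈ xs, ¬ t.Writes x) ∧ ∀ y, t.Leads y → y ∈ xs :=
  Iff.rfl

theorem InForNo.iterSeq {t : Term} (h : InForNo t) : ∀ n, InForNo (iterSeq t n)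
  | 0 => ⟨trivial, trivial⟩
  | 1 => h
  | n + 2 => inForNo_seq.2 ⟨h, InForNo.iterSeq h (n + 1)⟩

theorem inForNo_POW {x p : Reg} (hpx : p ≠ x) (b : ℕ) : InForNo (POW x p b) := by
  have hw : ∀ n y, (powNest x p n).Writes y ↔ p = y := by
    intro n
    induction n <;> simp_all [powNest, Term.Writes, Bodies.Writes]
  refine inForNo_normal.2 ⟨?_, ?_, by simpa [hw] using hpx, ?_⟩
  · induction b <;> simp_all [powNest, Term.Safe, Bodies.Safe]
  · induction b <;> simp_all [powNest, Term.WF, Bodies.WF, Bodies.Writes]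
  · induction b with
    | zero => simp [powNest, Term.Leads]
    | succ b ih =>
      rintro y (rfl | h)
      exacts [List.mem_singleton_self _, ih y h]

theorem inForNo_COPY {x y : Reg} (hxy : x ≠ y) (K : ℕ) : InForNo (COPY x y K) :=
  inForNo_normal.2 ⟨by simp [Term.Safe, Bodies.safe_iff],
    by simp [Term.WF, Bodies.wf_iff, Bodies.writes_iff, Term.Writes, hxy.symm],
    by simp [Term.Writes, Bodies.writes_iff, hxy.symm],
    by simp [Term.Leads, Bodies.leads_iff]⟩

theorem stripBody_writes {b i : ℕ} {y : Reg} (h : (stripBody b i).Writes y) :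
    y ∈ [flagR, rgtR] := by
  unfold stripBody at h
  split at h <;> simp only [Term.Writes] at h <;> simp only [List.mem_cons] <;> tauto

theorem stripBlanks_writes {b K : ℕ} {y : Reg} (h : (stripBlanks b K).Writes y) :
    y ∈ [bufR, rgtR, flagR] := by
  simp only [stripBlanks, COPY, Term.Writes, Bodies.writes_iff, get_mkBodies] at h
  rcases h with ⟨_, h⟩ | ⟨_, h⟩ | ⟨_, h⟩
  · simp [h]
  · simp [h]
  · have := stripBody_writes h
    simp only [List.mem_cons] at this ⊢
    tauto

theorem inForNo_stripBlanks (b K : ℕ) : InForNo (stripBlanks b K) := by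
  have hbody : ∀ i,
      (stripBody b i).Safe ∧ (stripBody b i).WF ∧ ∀ y, ¬ (stripBody b i).Leads y := by
    intro i
    unfold stripBody
    split <;> simp +decide [Term.Safe, Term.WF, Term.Writes, Term.Leads]
  have hbuf : ∀ i, ¬ (stripBody b i).Writes bufR :=
    fun _ h => absurd (stripBody_writes h) (by decide)
  refine inForNo_seq.2 ⟨inForNo_COPY (by decide) K, inForNo_seq.2 ⟨?_, ?_⟩⟩ <;>
    refine inForNo_normal.2 ⟨?_, ?_, ?_, ?_⟩
  all_goals simp +decide [Term.Safe, Term.WF, Term.Writes, Term.Leads, Bodies.safe_iff,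
    Bodies.wf_iff, Bodies.writes_iff, Bodies.leads_iff, hbody, hbuf]

def StraightLine (t : Term) : Prop := t.Safe ∧ t.WF ∧ ∀ y, ¬ t.Leads y

theorem straightLine_skip : StraightLine .skip := ⟨trivial, trivial, fun _ => id⟩

theorem straightLine_push {n : ℕ} {x : Reg} : StraightLine (.push n x) :=
  ⟨trivial, trivial, fun _ => id⟩

theorem straightLine_pop {n : ℕ} {x : Reg} : StraightLine (.pop n x) :=
  ⟨trivial, trivial, fun _ => id⟩

theorem StraightLine.seq {t u : Term} (ht : StraightLine t) (hu : StraightLine u) :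
    StraightLine (t ⨟ u) :=
  ⟨⟨ht.1, hu.1⟩, ⟨ht.2.1, hu.2.1⟩, fun y h => h.elim (ht.2.2 y) (hu.2.2 y)⟩

theorem StraightLine.ifeq {t : Term} {x : Reg} {n : ℕ} (ht : StraightLine t)
    (hx : ¬ t.Writes x) :
    StraightLine (.ifeq x n t) :=
  ⟨ht.1, ⟨ht.2.1, hx⟩, ht.2.2⟩

theorem straightLine_dispatch {α : Type*} [Fintype α] {r : Reg} {v : α → ℕ} {B : α → Term}
    (hB : ∀ a, StraightLine (B a)) (hr : ∀ a, ¬ (B a).Writes r) :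
    StraightLine (dispatch r v B) :=
  ⟨by simp [dispatch, fun a => (hB a).1], by simp [dispatch, fun a => (hB a).2.1, hr],
    fun y => by simp [dispatch, fun a => (hB a).2.2 y]⟩

section Program

variable {S : Type} {M : TM S} {eΓ : M.Γ → ℕ} {eQ : M.Q → ℕ}

theorem straightLine_readHead {x : Reg} (hxs : x ≠ scanR) : StraightLine (readHead M eΓ x) :=
  straightLine_push.seq (straightLine_dispatch (fun _ => straightLine_push) fun _ => hxs.symm)

theorem straightLine_fillBlank {x : Reg} (hxs : x ≠ scanR) : StraightLine (fillBlank M eΓ x) :=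
  (straightLine_readHead hxs).seq (straightLine_push.ifeq hxs)

theorem straightLine_moveHead {x y : Reg} (hxs : x ≠ scanR) (hys : y ≠ scanR) :
    StraightLine (moveHead M eΓ x y) :=
  (straightLine_fillBlank hxs).seq ((straightLine_readHead hxs).seq
    (straightLine_dispatch (fun _ => straightLine_pop.seq straightLine_push)
      fun _ h => h.elim hxs hys))

theorem straightLine_transition (q : M.Q) (a : M.Γ) : StraightLine (transition M eΓ eQ q a) := by
  refine straightLine_pop.seq (straightLine_push.seq ?_)
  split
  · exact straightLine_push
  · exact straightLine_push.seq (straightLine_moveHead (by decide) (by decide))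

theorem straightLine_scanSymbol (q : M.Q) : StraightLine (scanSymbol M eΓ eQ q) := by
  unfold scanSymbol
  split
  · exact straightLine_skip
  · exact (straightLine_fillBlank (by decide)).seq
      (straightLine_dispatch (fun _ => straightLine_push) fun _ => (by decide : codeR ≠ rgtR))

theorem straightLine_simStep : StraightLine (simStep M eΓ eQ) :=
  straightLine_push.seq ((straightLine_dispatch straightLine_scanSymbol
      fun _ h => absurd (scanSymbol_writes h) (by decide)).seq
    (straightLine_dispatch (fun p => straightLine_transition p.1 p.2)
      fun _ h => absurd (transition_writes h) (by decide)))

theorem inForNo_compile (a b : ℕ) : InForNo (compile M eΓ eQ a b) := by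
  have hclock : ¬ (simStep M eΓ eQ).Writes clockR := fun h => absurd (simStep_writes h) (by decide)
  refine inForNo_seq.2 ⟨inForNo_seq.2 ⟨⟨trivial, trivial⟩,
    (inForNo_POW (x := rgtR) (p := clockR) (by decide) b).iterSeq a⟩,
    inForNo_seq.2 ⟨inForNo_normal.2 ⟨straightLine_simStep.1, ⟨straightLine_simStep.2.1, hclock⟩,
      by simpa [Term.Writes, Bodies.Writes] using hclock, ?_⟩, inForNo_stripBlanks _ _⟩⟩
  rintro y (rfl | h)
  exacts [List.mem_singleton_self _, (straightLine_simStep.2.2 y h).elim]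

end Program

/-! ### Correctness -/

section Correctness

variable {S : Type} {M : TM S} {eΓ : M.Γ → ℕ} {eQ : M.Q → ℕ}

theorem eval_setup (a b : ℕ) (w : List S) :
    Eval (setup M eQ a b) (upd emptyStore rgtR ((w.map M.embed).map eΓ), 0)
      (upd (upd (upd emptyStore rgtR ((w.map M.embed).map eΓ)) qR [eQ M.q0]) clockR
        (List.replicate (a * w.length ^ b) 1), 0) := by
  refine (eval_push _ _ _).seq ?_
  simpa +decide [emptyStore] using eval_iterSeq_POW (x := rgtR) (p := clockR) (by decide) b a
    (upd (upd emptyStore rgtR ((w.map M.embed).map eΓ)) qR [eQ M.q0])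

theorem eval_loop (hΓinj : Function.Injective eΓ) (hΓlt : ∀ c, eΓ c < Fintype.card M.Γ)
    (hQinj : Function.Injective eQ) {φ : Store} {c : M.Config} (hσ : Sim M eΓ eQ (φ, 0) c) :
    ∃ φ', Eval (.normal [clockR] (.fort clockR (.single (simStep M eΓ eQ)))) (φ, 0) (φ', 0) ∧
      Sim M eΓ eQ (φ', 0) (M.haltStep^[(φ clockR).length] c) := by
  obtain ⟨⟨φ', k⟩, h, hσ'⟩ := EvalList.single_of_simulation (fun c σ => Sim M eΓ eQ σ c)
    M.haltStep (fun c σ hσ => by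
      obtain ⟨φ, k⟩ := σ
      obtain rfl : k = 0 := hσ.1
      obtain ⟨φ', h, h'⟩ := eval_simStep hΓinj hΓlt hQinj hσ
      exact ⟨_, h, h'⟩) (φ clockR) c (φ, 0) hσ
  obtain rfl : k = 0 := hσ'.1
  exact ⟨φ', .normal (.fort h), hσ'⟩

theorem eval_stripBlanks_simClean (hΓinj : Function.Injective eΓ)
    (hΓlt : ∀ c, eΓ c < Fintype.card M.Γ) {φ : Store} {c : M.Config}
    (hσ : Sim M eΓ eQ (φ, 0) c) (htrim : M.trim c.2.2 = c.2.2) (hbuf : φ bufR = [])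
    (hflag : φ flagR = []) :
    ∃ φ', Eval (stripBlanks (eΓ M.blank) (Fintype.card M.Γ)) (φ, 0) (φ', 0) ∧
      SimClean M eΓ eQ (φ', 0) c := by
  obtain ⟨hl, hq, n, hr⟩ := sim_iff.1 hσ
  obtain ⟨φ', hstrip, hr'⟩ := eval_stripBlanks (b := eΓ M.blank) (fun i hi => by
    rw [hr] at hi
    obtain ⟨c, -, rfl⟩ := List.mem_map.1 hi
    exact (hΓlt c).le) hbuf hflag
  have hframe : ∀ y ∈ [lftR, qR], φ' y = φ y :=
    fun y hy => hstrip.apply_eq_of_not_writes fun h => by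
      simp only [List.mem_cons, List.not_mem_nil, or_false] at hy
      rcases hy with rfl | rfl <;> exact absurd (stripBlanks_writes h) (by decide)
  refine ⟨φ', hstrip, rfl, by simp [hframe, hl], by simp [hframe, hq], ?_⟩
  show φ' rgtR = _
  rw [hr', hr, List.map_append, List.map_replicate,
    List.rdropWhile_append_replicate (by simp), List.rdropWhile_eq_self_iff]
  intro h
  rw [List.getLast_map]
  simpa [hΓinj.eq_iff] using TM.trim_eq_self_iff.1 htrim (by simpa using h)

theorem eval_compile (hΓinj : Function.Injective eΓ) (hΓlt : ∀ c, eΓ c < Fintype.card M.Γ)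
    (hQinj : Function.Injective eQ) (a b : ℕ) (w : List S) :
    ∃ τ, Eval (compile M eΓ eQ a b) (upd emptyStore rgtR ((w.map M.embed).map eΓ), 0) τ ∧
      SimClean M eΓ eQ τ (M.haltStep^[a * w.length ^ b] (M.init w)) := by
  set φ₁ := upd (upd (upd emptyStore rgtR ((w.map M.embed).map eΓ)) qR [eQ M.q0]) clockR
    (List.replicate (a * w.length ^ b) 1) with hφ₁
  have hσ₁ : Sim M eΓ eQ (φ₁, 0) (M.init w) := sim_iff.2
    ⟨by simp +decide [hφ₁, emptyStore, TM.init], by simp +decide [hφ₁, TM.init], 0,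
      by simp +decide [hφ₁, TM.init]⟩
  obtain ⟨φ, hloop, hσ⟩ := eval_loop hΓinj hΓlt hQinj hσ₁
  rw [show (φ₁ clockR).length = a * w.length ^ b by simp [hφ₁]] at hσ
  have hempty : ∀ y ∈ [bufR, flagR], φ y = [] := fun y hy => by
    simp only [List.mem_cons, List.not_mem_nil, or_false] at hy
    refine (hloop.apply_eq_of_not_writes fun h => ?_).trans ?_ <;>
      rcases hy with rfl | rfl
    exacts [absurd (simStep_writes h) (by decide), absurd (simStep_writes h) (by decide),
      by simp +decide [hφ₁, emptyStore], by simp +decide [hφ₁, emptyStore]]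
  obtain ⟨φ', hstrip, hclean⟩ := eval_stripBlanks_simClean hΓinj hΓlt hσ
    (TM.trim_iterate_haltStep_init w _) (hempty _ (by simp)) (hempty _ (by simp))
  exact ⟨_, (eval_setup a b w).seq (hloop.seq hstrip), hclean⟩

end Correctness

end ForNo

open ForNo in
/-- Correctness of the compiler: for every PTIME TM `M` with the
simulation-setup encodings there is a ForNo term `T` such that, whenever `M`
started on input `w` reaches a halting configuration `chalt`, `T` started with
`⟨⟨w⟩⟩` in register `rgt` evaluates to a state cleanly simulating `chalt`. -/
theorem compiler_correct {S : Type} [Fintype S] (M : TM S) (hM : M.PTime)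
    (encΓ : M.Γ → ℕ) (encQ : M.Q → ℕ) (hsetup : SimSetup M encΓ encQ) :
    ∃ T : Term, InForNo T ∧
      ∀ (w : List S) (chalt : M.Config) (k : ℕ),
        M.Steps k (M.init w) chalt → chalt.2.1 = M.qhalt →
        ∃ τ : FState,
          Eval T (upd emptyStore rgtR ((w.map M.embed).map encΓ), 0) τ ∧
          SimClean M encΓ encQ τ chalt := by
  obtain ⟨hΓinj, hΓlt, -, hQinj⟩ := hsetup
  obtain ⟨a, b, -, -, hpoly⟩ := hM
  refine ⟨compile M encΓ encQ a b, inForNo_compile a b, fun w chalt k hk hhalt => ?_⟩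
  obtain ⟨k₀, hk₀, c₀, hk₀c₀, hc₀⟩ := hpoly w
  have hc : chalt = c₀ := by
    rw [← hk.iterate_haltStep_eq hhalt (le_max_left k k₀),
      hk₀c₀.iterate_haltStep_eq hc₀ (le_max_right k k₀)]
  rw [hc, ← hk₀c₀.iterate_haltStep_eq hc₀ hk₀]
  exact eval_compile hΓinj hΓlt hQinj a b w
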